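/- Let H₁, H₂ be real Hilbert spaces, S : H₁ → H₂ bounded linear, r, s, α > 0, and suppose sequences (u^k) ⊂ H₁, (λ^k) ⊂ H₂ and points u* ∈ H₁, λ* ∈ H₂ satisfy for all k: ⟨S(u^{k+1} − u^k), λ^{k+1} − λ^k⟩ ≥ (1/r)⟨u^{k+1} − u*, u^{k+1} − u^k⟩ + (1/s)⟨λ^{k+1} − λ*, λ^{k+1} − λ^k⟩ + α‖u^{k+1} − u*‖². If additionally (u^k) and (λ^k) are bounded and ‖u^{k+1} − u^k‖ → 0 and ‖λ^{k+1} − λ^k‖ → 0, then u^k → u* strongly in H₁. -/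

import Mathlib

/-!
Write `e_k = u^{k+1} - u*`. Since `α > 0`, inequality (seqU) bounds `α ‖e_k‖²` by
`⟨S(u^{k+1} - u^k), λ^{k+1} - λ^k⟩ - (1/r)⟨e_k, u^{k+1} - u^k⟩ - (1/s)⟨λ^{k+1} - λ*, λ^{k+1} - λ^k⟩`.
Each of these inner products pairs a bounded sequence with a null one, so the right-hand side
tends to `0`, and hence so does `e_k`.
-/

open Filter Topology

section

variable {ι E : Type*} [NormedAddCommGroup E] {l : Filter ι}

theorem Filter.IsBoundedUnder.inner_tendsto_zero [InnerProductSpace ℝ E] {x y : ι → E}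
    (hx : IsBoundedUnder (· ≤ ·) l fun i => ‖x i‖) (hy : Tendsto y l (𝓝 0)) :
    Tendsto (fun i => inner ℝ (x i) (y i)) l (𝓝 0) :=
  hy.op_zero_isBoundedUnder_le hx (flip (inner ℝ)) fun a b =>
    (norm_inner_le_norm b a).trans_eq (mul_comm _ _)

theorem tendsto_zero_of_mul_norm_sq_le {x : ι → E} {g : ι → ℝ} {α : ℝ} (hα : 0 < α)
    (hle : ∀ i, α * ‖x i‖ ^ 2 ≤ g i) (hg : Tendsto g l (𝓝 0)) :
    Tendsto x l (𝓝 0) := by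
  have hsq : Tendsto (fun i => ‖x i‖ ^ 2) l (𝓝 0) := by
    refine squeeze_zero (fun i => sq_nonneg _) (fun i => ?_) (by simpa using hg.div_const α)
    rw [le_div_iff₀ hα, mul_comm]
    exact hle i
  have hnorm := hsq.sqrt
  simp only [Real.sqrt_sq (norm_nonneg _), Real.sqrt_zero] at hnorm
  exact tendsto_zero_iff_norm_tendsto_zero.2 hnorm

end

theorem stmt15_general {H₁ H₂ : Type*} [NormedAddCommGroup H₁] [InnerProductSpace ℝ H₁]
    [NormedAddCommGroup H₂] [InnerProductSpace ℝ H₂]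
    (S : H₁ →L[ℝ] H₂) (r s α : ℝ) (hα : 0 < α)
    (u : ℕ → H₁) (lam : ℕ → H₂) (ustar : H₁) (lamstar : H₂)
    (hineq : ∀ k : ℕ,
      (inner ℝ (S (u (k + 1) - u k)) (lam (k + 1) - lam k) : ℝ) ≥
        (1 / r) * (inner ℝ (u (k + 1) - ustar) (u (k + 1) - u k) : ℝ)
        + (1 / s) * (inner ℝ (lam (k + 1) - lamstar) (lam (k + 1) - lam k) : ℝ)
        + α * ‖u (k + 1) - ustar‖ ^ 2)
    (hbdd : ∃ M : ℝ, ∀ k : ℕ, ‖u k‖ ≤ M ∧ ‖lam k‖ ≤ M)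
    (hu : Filter.Tendsto (fun k => ‖u (k + 1) - u k‖) Filter.atTop (nhds 0))
    (hlam : Filter.Tendsto (fun k => ‖lam (k + 1) - lam k‖) Filter.atTop (nhds 0)) :
    Filter.Tendsto u Filter.atTop (nhds ustar) := by
  obtain ⟨M, hM⟩ := hbdd
  have hdu := tendsto_zero_iff_norm_tendsto_zero.2 hu
  have hdlam := tendsto_zero_iff_norm_tendsto_zero.2 hlam
  have hSdu : Tendsto (fun k => S (u (k + 1) - u k)) atTop (𝓝 0) :=
    (S.continuous.tendsto' 0 0 (map_zero S)).comp hdu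
  have hu_bdd : IsBoundedUnder (· ≤ ·) atTop fun k => ‖u (k + 1) - ustar‖ :=
    isBoundedUnder_of ⟨M + ‖ustar‖, fun k =>
      (norm_sub_le _ _).trans (add_le_add_left (hM (k + 1)).1 _)⟩
  have hlam_bdd : IsBoundedUnder (· ≤ ·) atTop fun k => ‖lam (k + 1) - lamstar‖ :=
    isBoundedUnder_of ⟨M + ‖lamstar‖, fun k =>
      (norm_sub_le _ _).trans (add_le_add_left (hM (k + 1)).2 _)⟩
  have hrhs := ((hSdu.norm.isBoundedUnder_le.inner_tendsto_zero hdlam).sub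
    ((hu_bdd.inner_tendsto_zero hdu).const_mul (1 / r))).sub
    ((hlam_bdd.inner_tendsto_zero hdlam).const_mul (1 / s))
  simp only [mul_zero, sub_zero] at hrhs
  have he := tendsto_zero_of_mul_norm_sq_le hα (fun k => by linear_combination hineq k) hrhs
  exact (tendsto_add_atTop_iff_nat 1).1 (tendsto_sub_nhds_zero_iff.1 he)

/-- if the key inequality (seqU) holds for all `k`, the sequences
are bounded, and the successive differences tend to zero, then `u^k → u*`. -/
theorem stmt15 {H₁ H₂ : Type*} [NormedAddCommGroup H₁] [InnerProductSpace ℝ H₁]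
    [NormedAddCommGroup H₂] [InnerProductSpace ℝ H₂] [CompleteSpace H₁] [CompleteSpace H₂]
    (S : H₁ →L[ℝ] H₂) (r s α : ℝ) (hr : 0 < r) (hs : 0 < s) (hα : 0 < α)
    (u : ℕ → H₁) (lam : ℕ → H₂) (ustar : H₁) (lamstar : H₂)
    (hineq : ∀ k : ℕ,
      (inner ℝ (S (u (k + 1) - u k)) (lam (k + 1) - lam k) : ℝ) ≥
        (1 / r) * (inner ℝ (u (k + 1) - ustar) (u (k + 1) - u k) : ℝ)
        + (1 / s) * (inner ℝ (lam (k + 1) - lamstar) (lam (k + 1) - lam k) : ℝ)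
        + α * ‖u (k + 1) - ustar‖ ^ 2)
    (hbdd : ∃ M : ℝ, ∀ k : ℕ, ‖u k‖ ≤ M ∧ ‖lam k‖ ≤ M)
    (hu : Filter.Tendsto (fun k => ‖u (k + 1) - u k‖) Filter.atTop (nhds 0))
    (hlam : Filter.Tendsto (fun k => ‖lam (k + 1) - lam k‖) Filter.atTop (nhds 0)) :
    Filter.Tendsto u Filter.atTop (nhds ustar) :=
  stmt15_general S r s α hα u lam ustar lamstar hineq hbdd hu hlam
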